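/- (Theorem 7, two-stage, multiple scenarios) Let U = {c^1,…,c^N} ⊆ ℝ^n and C = {ĉ^1,…,ĉ^K} ⊆ ℝ^n be finite sets of nonnegative vectors, and let α, β ≥ 1 satisfy: (i) for every i ∈ [N] there exists k ∈ [K] with c^i ≤ α·ĉ^k componentwise, and (ii) for every k ∈ [K] there exists i ∈ [N] with ĉ^k ≤ β·c^i componentwise. If x̂ ∈ X' minimizes Cᵀx + max_{ĉ ∈ C} inf_{y ∈ X(x)} ĉᵀy over X', then for every x ∈ X' it holds that g_U(x̂) ≤ αβ · g_U(x); that is, an optimal solution to the two-stage robust problem with respect to C gives an αβ-approximation to the two-stage robust problem with respect to U. -/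

import Mathlib

/-!
Dominating each scenario of `U` by `α` times a scenario of `C` costs at most a factor `α` in every
second-stage infimum, hence in the worst case; as the first-stage cost is nonnegative and `α ≥ 1`,
the whole robust value grows by at most the factor `α`. Thus `g_U(x̂) ≤ α g_C(x̂) ≤ α g_C(x)` by the
optimality of `x̂`, and symmetrically `g_C(x) ≤ β g_U(x)`.
-/

open Finset Matrix

theorem sInf_image_le_mul_sInf_image {ι : Type*} {T : Set ι} {f g : ι → ℝ} {α : ℝ}
    (hf : BddBelow (f '' T)) (hα : 0 ≤ α) (hfg : ∀ y ∈ T, f y ≤ α * g y) :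
    sInf (f '' T) ≤ α * sInf (g '' T) := by
  rw [sInf_image', sInf_image', Real.mul_iInf_of_nonneg hα]
  exact ciInf_mono (Set.image_eq_range f T ▸ hf) fun y => hfg y y.2

section TwoStage

variable {κ σ ι ι' : Type*} [Fintype σ] [Fintype ι] [Fintype ι'] [Nonempty ι] [Nonempty ι']

noncomputable def worstCaseCost (X : Set ((κ → ℝ) × (σ → ℝ))) (V : ι → σ → ℝ) (x : κ → ℝ) : ℝ :=
  univ.sup' univ_nonempty fun i => sInf ((V i ⬝ᵥ ·) '' {y | (x, y) ∈ X})

/-- The two-stage robust value `g_V(x)`. -/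
noncomputable def robustValue [Fintype κ] (X : Set ((κ → ℝ) × (σ → ℝ))) (C : κ → ℝ)
    (V : ι → σ → ℝ) (x : κ → ℝ) : ℝ :=
  C ⬝ᵥ x + worstCaseCost X V x

theorem sInf_dotProduct_le_mul {T : Set (σ → ℝ)} (hT : ∀ y ∈ T, 0 ≤ y) {v w : σ → ℝ}
    {α : ℝ} (hv : 0 ≤ v) (hα : 0 ≤ α) (hvw : v ≤ α • w) :
    sInf ((v ⬝ᵥ ·) '' T) ≤ α * sInf ((w ⬝ᵥ ·) '' T) := by
  refine sInf_image_le_mul_sInf_image ⟨0, ?_⟩ hα fun y hy => ?_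
  · rintro _ ⟨y, hy, rfl⟩
    exact dotProduct_nonneg_of_nonneg hv (hT y hy)
  · rw [← smul_eq_mul, ← smul_dotProduct]
    exact dotProduct_le_dotProduct_of_nonneg_right hvw (hT y hy)

theorem worstCaseCost_le_mul {X : Set ((κ → ℝ) × (σ → ℝ))} {x : κ → ℝ}
    (hX : ∀ y, (x, y) ∈ X → 0 ≤ y) {V : ι → σ → ℝ} {W : ι' → σ → ℝ} {α : ℝ}
    (hV : ∀ i, 0 ≤ V i) (hα : 0 ≤ α) (hVW : ∀ i, ∃ k, V i ≤ α • W k) :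
    worstCaseCost X V x ≤ α * worstCaseCost X W x := by
  refine sup'_le _ _ fun i _ => ?_
  obtain ⟨k, hk⟩ := hVW i
  calc sInf ((V i ⬝ᵥ ·) '' {y | (x, y) ∈ X})
      ≤ α * sInf ((W k ⬝ᵥ ·) '' {y | (x, y) ∈ X}) := sInf_dotProduct_le_mul hX (hV i) hα hk
    _ ≤ α * worstCaseCost X W x := by
      gcongr
      exact le_sup' (fun k => sInf ((W k ⬝ᵥ ·) '' {y | (x, y) ∈ X})) (mem_univ k)

theorem robustValue_le_mul [Fintype κ] {X : Set ((κ → ℝ) × (σ → ℝ))}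
    (hX : ∀ p ∈ X, 0 ≤ p.1 ∧ 0 ≤ p.2) {C : κ → ℝ} (hC : 0 ≤ C) {V : ι → σ → ℝ} {W : ι' → σ → ℝ}
    {α : ℝ} (hV : ∀ i, 0 ≤ V i) (hα : 1 ≤ α) (hVW : ∀ i, ∃ k, V i ≤ α • W k) {x : κ → ℝ}
    (hx : ∃ y, (x, y) ∈ X) :
    robustValue X C V x ≤ α * robustValue X C W x := by
  obtain ⟨y, hxy⟩ := hx
  have hfirst : C ⬝ᵥ x ≤ α * (C ⬝ᵥ x) :=
    le_mul_of_one_le_left (dotProduct_nonneg_of_nonneg hC (hX _ hxy).1) hα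
  have hworst : worstCaseCost X V x ≤ α * worstCaseCost X W x :=
    worstCaseCost_le_mul (fun y hy => (hX _ hy).2) hV (by linarith) hVW
  rw [robustValue, robustValue, mul_add]
  exact add_le_add hfirst hworst

end TwoStage

/-- Theorem 7 (two-stage, multiple scenarios): if `α, β ≥ 1`, every `c^i` is dominated by
`α` times some `chat^k`, and every `chat^k` is dominated by `β` times some `c^i`, then an
optimizer of the two-stage robust problem with respect to `C` is an `αβ`-approximation
for the two-stage robust problem with respect to `U`. -/
theorem stmt_7 {nx n N K : ℕ} [NeZero N] [NeZero K]
    (X : Set ((Fin nx → ℝ) × (Fin n → ℝ)))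
    (hXnonneg : ∀ p ∈ X, (∀ j, 0 ≤ p.1 j) ∧ (∀ j, 0 ≤ p.2 j))
    (Cst : Fin nx → ℝ) (hCst : ∀ j, 0 ≤ Cst j)
    (c : Fin N → Fin n → ℝ) (hc : ∀ i j, 0 ≤ c i j)
    (chat : Fin K → Fin n → ℝ) (hchat : ∀ k j, 0 ≤ chat k j)
    (α β : ℝ) (hα : 1 ≤ α) (hβ : 1 ≤ β)
    (hdom : ∀ i, ∃ k, ∀ j, c i j ≤ α * chat k j)
    (hcov : ∀ k, ∃ i, ∀ j, chat k j ≤ β * c i j)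
    (xhat : Fin nx → ℝ) (hxhat : ∃ y, (xhat, y) ∈ X)
    (hopt : ∀ x : Fin nx → ℝ, (∃ y, (x, y) ∈ X) →
      (∑ j, Cst j * xhat j) +
          (Finset.univ.sup' Finset.univ_nonempty fun k =>
            sInf ((fun y => ∑ j, chat k j * y j) '' {y | (xhat, y) ∈ X})) ≤
        (∑ j, Cst j * x j) +
          (Finset.univ.sup' Finset.univ_nonempty fun k =>
            sInf ((fun y => ∑ j, chat k j * y j) '' {y | (x, y) ∈ X}))) :
    ∀ x : Fin nx → ℝ, (∃ y, (x, y) ∈ X) →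
      (∑ j, Cst j * xhat j) +
          (Finset.univ.sup' Finset.univ_nonempty fun i =>
            sInf ((fun y => ∑ j, c i j * y j) '' {y | (xhat, y) ∈ X})) ≤
        α * β * ((∑ j, Cst j * x j) +
          (Finset.univ.sup' Finset.univ_nonempty fun i =>
            sInf ((fun y => ∑ j, c i j * y j) '' {y | (x, y) ∈ X}))) := by
  intro x hx
  have hxhat_opt : robustValue X Cst chat xhat ≤ robustValue X Cst chat x := hopt x hx
  change robustValue X Cst c xhat ≤ α * β * robustValue X Cst c x
  calc robustValue X Cst c xhat
      ≤ α * robustValue X Cst chat xhat := robustValue_le_mul hXnonneg hCst hc hα hdom hxhat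
    _ ≤ α * robustValue X Cst chat x := by gcongr
    _ ≤ α * (β * robustValue X Cst c x) := by
      gcongr
      exact robustValue_le_mul hXnonneg hCst hchat hβ hcov hx
    _ = α * β * robustValue X Cst c x := by ring
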